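/- Let G = (V,E) be a finite simple graph on V = {1,…,n}, let J be a set of subsets of V, and let (x,X) ∈ TH²(G) be such that X_I ∈ STAB²(G_I) for all I ∈ J and γ := 1ᵀx ≥ 1. Then the matrix X' = (1/γ) X satisfies: X' ∈ CTH²(G), X'_I ∈ STAB²(G_I) for all I ∈ J, and ⟨J_{n×n}, X'⟩ ≥ γ. -/

import Mathlib

open Matrix

noncomputable section

/-- A stable set vector of a graph `G`: a 0/1 vector with `s i * s j = 0` on edges. -/
def IsStableVec {V : Type*} (G : SimpleGraph V) (s : V → ℝ) : Prop :=
  (∀ i, s i = 0 ∨ s i = 1) ∧ ∀ i j, G.Adj i j → s i * s j = 0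

/-- The squared stable set polytope `STAB²(G) = conv{ s sᵀ : s ∈ S(G) }`. -/
def stab2 {V : Type*} (G : SimpleGraph V) : Set (Matrix V V ℝ) :=
  convexHull ℝ { M | ∃ s, IsStableVec G s ∧ M = Matrix.vecMulVec s s }

/-- The scaled squared stable set polytope
`SSTAB²(G) = conv({ (1/(sᵀs)) s sᵀ : s ∈ S(G), s ≠ 0 } ∪ {0})`. -/
def sstab2 {V : Type*} [Fintype V] (G : SimpleGraph V) : Set (Matrix V V ℝ) :=
  convexHull ℝ
    ({ M | ∃ s, IsStableVec G s ∧ s ≠ 0 ∧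
        M = (∑ k, s k * s k)⁻¹ • Matrix.vecMulVec s s } ∪ {(0 : Matrix V V ℝ)})

/-- The feasible region `TH²(G)` of the SDP (Tn+1): pairs `(x, X)` with `X` symmetric,
`diag X = x`, `X i j = 0` on edges and `X - x xᵀ` positive semidefinite. -/
def th2 {n : ℕ} (G : SimpleGraph (Fin n)) :
    Set ((Fin n → ℝ) × Matrix (Fin n) (Fin n) ℝ) :=
  { p | p.2.IsSymm ∧ (∀ i, p.2 i i = p.1 i) ∧
      (∀ i j, G.Adj i j → p.2 i j = 0) ∧ (p.2 - Matrix.vecMulVec p.1 p.1).PosSemidef }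

/-- The feasible region `CTH²(G)` of the SDP (Tn): symmetric PSD matrices with trace 1
vanishing on edges. -/
def cth2 {n : ℕ} (G : SimpleGraph (Fin n)) : Set (Matrix (Fin n) (Fin n) ℝ) :=
  { X | X.IsSymm ∧ X.trace = 1 ∧ (∀ i j, G.Adj i j → X i j = 0) ∧ X.PosSemidef }

/-- The principal submatrix `X_I` of `X` indexed by `I`. -/
def subMat {n : ℕ} (X : Matrix (Fin n) (Fin n) ℝ) (I : Finset (Fin n)) :
    Matrix (I : Set (Fin n)) (I : Set (Fin n)) ℝ :=
  X.submatrix Subtype.val Subtype.val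

/-- The exact subgraph constraint (ESC) for the subgraph of `G` induced by `I`. -/
def escFeas {n : ℕ} (G : SimpleGraph (Fin n)) (X : Matrix (Fin n) (Fin n) ℝ)
    (I : Finset (Fin n)) : Prop :=
  subMat X I ∈ stab2 (G.induce (I : Set (Fin n)))

/-- The scaled exact subgraph constraint (SESC) for the subgraph of `G` induced by `I`. -/
def sescFeas {n : ℕ} (G : SimpleGraph (Fin n)) (X : Matrix (Fin n) (Fin n) ℝ)
    (I : Finset (Fin n)) : Prop :=
  subMat X I ∈ sstab2 (G.induce (I : Set (Fin n)))

/-- `z^E_J(G)`: optimal value of (Tn+1) with the ESCs for all `I ∈ J`. -/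
def zE {n : ℕ} (G : SimpleGraph (Fin n)) (J : Set (Finset (Fin n))) : ℝ :=
  sSup { r | ∃ x X, (x, X) ∈ th2 G ∧ (∀ I ∈ J, escFeas G X I) ∧ r = ∑ i, x i }

/-- `z^C_J(G)`: optimal value of (Tn) with the ESCs for all `I ∈ J`. -/
def zC {n : ℕ} (G : SimpleGraph (Fin n)) (J : Set (Finset (Fin n))) : ℝ :=
  sSup { r | ∃ X, X ∈ cth2 G ∧ (∀ I ∈ J, escFeas G X I) ∧ r = ∑ i, ∑ j, X i j }

/-- `z^S_J(G)`: optimal value of (Tn) with the SESCs for all `I ∈ J`. -/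
def zS {n : ℕ} (G : SimpleGraph (Fin n)) (J : Set (Finset (Fin n))) : ℝ :=
  sSup { r | ∃ X, X ∈ cth2 G ∧ (∀ I ∈ J, sescFeas G X I) ∧ r = ∑ i, ∑ j, X i j }

/-- The collection `J_k` of all vertex subsets of cardinality `k`. -/
def Jk (n k : ℕ) : Set (Finset (Fin n)) := { I | I.card = k }

/-!
Writing `X = (X - x xᵀ) + x xᵀ` shows that `X` is positive semidefinite, and testing
`X - x xᵀ ⪰ 0` against the all-ones vector gives `1ᵀ X 1 ≥ (1ᵀ x)² = γ²`.
Since `trace X = γ`, the matrix `γ⁻¹ X` has trace one and total sum at least `γ`.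
The exact subgraph constraints survive the scaling because `STAB²` is convex and contains `0`
(the empty stable set), so it is closed under multiplication by any `t ∈ [0, 1]`,
here `t = γ⁻¹`.
-/

open Set

namespace Matrix

variable {ι : Type*} [Fintype ι] {X : Matrix ι ι ℝ} {x : ι → ℝ}

theorem PosSemidef.of_sub_vecMulVec_self (h : (X - vecMulVec x x).PosSemidef) :
    X.PosSemidef := by
  simpa using h.add (posSemidef_vecMulVec_self_star x)

theorem sq_sum_le_sum_sum_of_posSemidef_sub_vecMulVec (h : (X - vecMulVec x x).PosSemidef) :
    (∑ i, x i) ^ 2 ≤ ∑ i, ∑ j, X i j := by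
  have h1 := h.dotProduct_mulVec_nonneg 1
  simp only [star_trivial, sub_mulVec, dotProduct_sub, vecMulVec_mulVec, op_smul_eq_smul,
    dotProduct_smul, smul_eq_mul, one_dotProduct, mulVec, dotProduct_one] at h1
  rw [sq]
  linarith

end Matrix

theorem zero_mem_stab2 {V : Type*} (G : SimpleGraph V) : (0 : Matrix V V ℝ) ∈ stab2 G :=
  subset_convexHull ℝ _
    ⟨0, ⟨fun _ => Or.inl rfl, fun _ _ _ => mul_zero 0⟩, (vecMulVec_zero 0).symm⟩

theorem smul_mem_stab2 {V : Type*} {G : SimpleGraph V} {M : Matrix V V ℝ} (hM : M ∈ stab2 G)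
    {t : ℝ} (ht : t ∈ Icc 0 1) : t • M ∈ stab2 G :=
  (convex_convexHull ℝ _).smul_mem_of_zero_mem (zero_mem_stab2 G) hM ht

theorem escFeas.smul {n : ℕ} {G : SimpleGraph (Fin n)} {X : Matrix (Fin n) (Fin n) ℝ}
    {I : Finset (Fin n)} (h : escFeas G X I) {t : ℝ} (ht : t ∈ Icc 0 1) :
    escFeas G (t • X) I :=
  smul_mem_stab2 h ht

theorem inv_sum_smul_mem_cth2 {n : ℕ} {G : SimpleGraph (Fin n)} {x : Fin n → ℝ}
    {X : Matrix (Fin n) (Fin n) ℝ} (hmem : (x, X) ∈ th2 G) (hγ : 0 < ∑ i, x i) :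
    (∑ i, x i)⁻¹ • X ∈ cth2 G := by
  obtain ⟨hsymm, hdiag, hedge, hpsd⟩ := hmem
  have htrace : X.trace = ∑ i, x i := Finset.sum_congr rfl fun i _ => hdiag i
  refine ⟨hsymm.smul _, ?_, fun i j hij => ?_, hpsd.of_sub_vecMulVec_self.smul (by positivity)⟩
  · rw [trace_smul, htrace, smul_eq_mul, inv_mul_cancel₀ hγ.ne']
  · rw [Matrix.smul_apply, show X i j = 0 from hedge i j hij, smul_zero]

/-- if `(x,X) ∈ TH²(G)` satisfies the ESCs for all `I ∈ J` and
`γ = 1ᵀx ≥ 1`, then `X' = (1/γ) X` lies in `CTH²(G)`, satisfies the same ESCs, and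
`⟨J_{n×n}, X'⟩ ≥ γ`. -/
theorem stmt14 {n : ℕ} (G : SimpleGraph (Fin n)) (J : Set (Finset (Fin n)))
    (x : Fin n → ℝ) (X : Matrix (Fin n) (Fin n) ℝ)
    (hmem : (x, X) ∈ th2 G) (hJ : ∀ I ∈ J, escFeas G X I)
    (hγ : 1 ≤ ∑ i, x i) :
    (∑ i, x i)⁻¹ • X ∈ cth2 G ∧
    (∀ I ∈ J, escFeas G ((∑ i, x i)⁻¹ • X) I) ∧
    (∑ i, x i) ≤ ∑ i, ∑ j, ((∑ k, x k)⁻¹ • X) i j := by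
  set γ := ∑ i, x i
  have hγ0 : 0 < γ := zero_lt_one.trans_le hγ
  refine ⟨inv_sum_smul_mem_cth2 hmem hγ0,
    fun I hI => (hJ I hI).smul ⟨by positivity, inv_le_one_of_one_le₀ hγ⟩, ?_⟩
  calc γ = γ⁻¹ * γ ^ 2 := by field_simp
    _ ≤ γ⁻¹ * ∑ i, ∑ j, X i j := by
      gcongr
      exact sq_sum_le_sum_sum_of_posSemidef_sub_vecMulVec hmem.2.2.2
    _ = ∑ i, ∑ j, (γ⁻¹ • X) i j := by
      simp only [Matrix.smul_apply, smul_eq_mul, Finset.mul_sum]
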